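/- arXiv:1611.07895 — 4 statements merged into one kernel-verified Lean document; each statement's English description precedes it below -/
import Mathlib

section
/- The map Σ ∋ Δ ↦ Φ(χ_Δ) is a positive operator-valued measure: Φ(χ_Ξ) = 1, Φ(χ_Δ) ≥ 0 for all Δ ∈ Σ, and for every sequence of pairwise disjoint sets Δ_n ∈ Σ, Φ(χ_{⋃_n Δ_n}) = ∑_n Φ(χ_{Δ_n}) where the series converges in the weak operator topology. -/
open MeasureTheory Filter
open scoped ENNReal NNReal BigOperators

noncomputable section

/-- A normal state given by a density matrix, presented through a (sub-)orthonormal family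
of vectors `ψ i` with `∑ ‖ψ i‖² = 1`:  `ω(A) = ∑ ⟪ψ i, A ψ i⟫`. -/
structure DensityState (H : Type*) [NormedAddCommGroup H] [InnerProductSpace ℂ H] where
  ψ : ℕ → H
  summable' : Summable fun i => ‖ψ i‖ ^ 2
  norm_one : ∑' i, ‖ψ i‖ ^ 2 = 1

/-- The value `ω(A) = tr(P_ω A)` of a normal state on an operator. -/
def DensityState.val {H : Type*} [NormedAddCommGroup H] [InnerProductSpace ℂ H]
    (ω : DensityState H) (A : H →L[ℂ] H) : ℂ :=
  ∑' i, @inner ℂ H _ (ω.ψ i) (A (ω.ψ i))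

/-- The cylinder set of histories whose first `n` outcomes are `v`. -/
def cyl {𝒳 : Type*} {n : ℕ} (v : Fin n → 𝒳) : Set (ℕ → 𝒳) :=
  {x | ∀ i : Fin n, x (i : ℕ) = v i}

/-- `Π_{ξ^{(m,n)}} = π_{ξ_m}(m) ⋯ π_{ξ_{n-1}}(n-1)` (half-open convention `[m,n)`). -/
def blockOp {H 𝒳 : Type*} [NormedAddCommGroup H] [InnerProductSpace ℂ H]
    (π : ℕ → 𝒳 → (H →L[ℂ] H)) (m n : ℕ) (ξ : ℕ → 𝒳) : H →L[ℂ] H :=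
  ((List.range' m (n - m)).map fun k => π k (ξ k)).prod

/-- `Π_{ξ^{(n)}} = π_{ξ₁}(1) ⋯ π_{ξ_n}(n)` for the first `n` outcomes `v`. -/
def histOp {H 𝒳 : Type*} [NormedAddCommGroup H] [InnerProductSpace ℂ H]
    (π : ℕ → 𝒳 → (H →L[ℂ] H)) {n : ℕ} (v : Fin n → 𝒳) : H →L[ℂ] H :=
  (List.ofFn fun i : Fin n => π (i : ℕ) (v i)).prod

/-- `μ` is the LSW measure of the functional `φ`:
`μ(ξ₁,…,ξ_n) = φ(Π_{ξ^{(n)}} (Π_{ξ^{(n)}})^*)`. -/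
def IsLSW {H 𝒳 : Type*} [NormedAddCommGroup H] [InnerProductSpace ℂ H] [CompleteSpace H]
    [MeasurableSpace 𝒳] (π : ℕ → 𝒳 → (H →L[ℂ] H)) (φ : (H →L[ℂ] H) → ℂ)
    (μ : Measure (ℕ → 𝒳)) : Prop :=
  ∀ (n : ℕ) (v : Fin n → 𝒳),
    μ (cyl v) = ENNReal.ofReal (φ (histOp π v * star (histOp π v))).re

section Aux

variable {H : Type*} [NormedAddCommGroup H] [InnerProductSpace ℂ H]

/-- The vector state associated with a nonzero vector. -/
def vecState (z : H) (hz : z ≠ 0) : DensityState H where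
  ψ := fun n => if n = 0 then ((‖z‖⁻¹ : ℝ) : ℂ) • z else 0
  summable' := by
    apply summable_of_ne_finset_zero (s := {0})
    intro i hi
    simp only [Finset.mem_singleton] at hi
    simp [hi]
  norm_one := by
    rw [tsum_eq_single 0 (by intro b hb; simp [hb])]
    have h1 : ‖((‖z‖⁻¹ : ℝ) : ℂ) • z‖ ^ 2 = 1 := by
      rw [norm_smul, Complex.norm_real, Real.norm_eq_abs,
        abs_of_nonneg (inv_nonneg.mpr (norm_nonneg z)),
        inv_mul_cancel₀ (norm_ne_zero_iff.mpr hz)]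
      norm_num
    simpa using h1

lemma vecState_val (z : H) (hz : z ≠ 0) (A : H →L[ℂ] H) :
    @inner ℂ H _ z (A z) = ((‖z‖ ^ 2 : ℝ) : ℂ) * (vecState z hz).val A := by
  have h0 : (vecState z hz).val A
      = @inner ℂ H _ (((‖z‖⁻¹ : ℝ) : ℂ) • z) (A (((‖z‖⁻¹ : ℝ) : ℂ) • z)) := by
    rw [DensityState.val, tsum_eq_single 0 (by intro b hb; simp [vecState, hb])]
    simp [vecState]
  rw [h0, A.map_smul, inner_smul_left, inner_smul_right, Complex.conj_ofReal]
  have hn : (‖z‖ : ℂ) ≠ 0 := by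
    simpa using norm_ne_zero_iff.mpr hz
  push_cast
  field_simp

lemma DensityState.val_one (ω : DensityState H) : ω.val 1 = 1 := by
  have h : ∀ i, @inner ℂ H _ (ω.ψ i) ((1 : H →L[ℂ] H) (ω.ψ i)) = ((‖ω.ψ i‖ ^ 2 : ℝ) : ℂ) := by
    intro i
    rw [ContinuousLinearMap.one_apply, inner_self_eq_norm_sq_to_K]
    norm_cast
  rw [DensityState.val]
  simp_rw [h]
  rw [← Complex.ofReal_tsum, ω.norm_one]
  norm_num

lemma lsw_univ {𝒳 : Type*} [MeasurableSpace 𝒳] [CompleteSpace H]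
    (π : ℕ → 𝒳 → (H →L[ℂ] H)) (ω : DensityState H) (ν : Measure (ℕ → 𝒳))
    (h : IsLSW π ω.val ν) : ν Set.univ = 1 := by
  have hc : (cyl (fun i : Fin 0 => i.elim0) : Set (ℕ → 𝒳)) = Set.univ := by
    ext x
    simp only [cyl, Set.mem_setOf_eq, Set.mem_univ, iff_true]
    exact fun i => i.elim0
  have h0 := h 0 (fun i => i.elim0)
  rw [hc] at h0
  have hone : histOp π (fun i : Fin 0 => i.elim0) = 1 := by
    simp [histOp, List.ofFn_zero]
  rw [h0, hone]
  have : (1 : H →L[ℂ] H) * star 1 = 1 := by simp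
  rw [this, ω.val_one]
  simp

end Aux

/-- `Δ ↦ Φ(χ_Δ)` is a positive operator-valued measure: `Φ(χ_Ξ) = 1`,
`Φ(χ_Δ) ≥ 0`, and countable additivity in the weak operator topology. -/
theorem Phi_of_indicator_is_POVM
    {H 𝒳 : Type*} [NormedAddCommGroup H] [InnerProductSpace ℂ H] [CompleteSpace H]
    [TopologicalSpace.SeparableSpace H]
    [Fintype 𝒳] [Nonempty 𝒳] [MeasurableSpace 𝒳] [MeasurableSingletonClass 𝒳]
    (π : ℕ → 𝒳 → (H →L[ℂ] H))
    (hsa : ∀ k x, IsSelfAdjoint (π k x)) (hid : ∀ k x, IsIdempotentElem (π k x))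
    (hsum : ∀ k, ∑ x : 𝒳, π k x = 1)
    (μ : DensityState H → Measure (ℕ → 𝒳))
    (hμ : ∀ ω : DensityState H, IsLSW π ω.val (μ ω))
    (Φ : Set (ℕ → 𝒳) → (H →L[ℂ] H))
    (hΦ : ∀ Δ : Set (ℕ → 𝒳), MeasurableSet Δ →
      ∀ ω : DensityState H, ω.val (Φ Δ) = ((μ ω Δ).toReal : ℂ)) :
    Φ Set.univ = 1 ∧
    (∀ Δ : Set (ℕ → 𝒳), MeasurableSet Δ → 0 ≤ Φ Δ) ∧
    (∀ Δ : ℕ → Set (ℕ → 𝒳), (∀ n, MeasurableSet (Δ n)) →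
      Pairwise (Function.onFun Disjoint Δ) →
      ∀ x y : H,
        HasSum (fun n => @inner ℂ H _ x (Φ (Δ n) y)) (@inner ℂ H _ x (Φ (⋃ n, Δ n) y))) := by
  have hμuniv : ∀ ω : DensityState H, μ ω Set.univ = 1 := fun ω =>
    lsw_univ π ω (μ ω) (hμ ω)
  -- diagonal matrix elements of `Φ Δ`
  have diag : ∀ (Δ : Set (ℕ → 𝒳)), MeasurableSet Δ → ∀ (z : H) (hz : z ≠ 0),
      @inner ℂ H _ z (Φ Δ z) = ((‖z‖ ^ 2 * (μ (vecState z hz) Δ).toReal : ℝ) : ℂ) := by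
    intro Δ hm z hz
    rw [vecState_val z hz, hΦ Δ hm]
    push_cast
    ring
  -- part 1: `Φ univ = 1`
  have h1 : Φ Set.univ = 1 := by
    apply ContinuousLinearMap.coe_injective
    rw [← ext_inner_map]
    intro x
    by_cases hx : x = 0
    · simp [hx]
    · have hd := diag Set.univ MeasurableSet.univ x hx
      rw [hμuniv] at hd
      have hr : @inner ℂ H _ x ((Φ Set.univ) x) = ((‖x‖ ^ 2 : ℝ) : ℂ) := by
        simpa using hd
      have : (@inner ℂ H _ ((Φ Set.univ) x) x) = ((‖x‖ ^ 2 : ℝ) : ℂ) := by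
        rw [← inner_conj_symm, hr, Complex.conj_ofReal]
      rw [ContinuousLinearMap.coe_coe, ContinuousLinearMap.coe_coe, this,
        ContinuousLinearMap.one_apply, inner_self_eq_norm_sq_to_K]
      norm_cast
  -- part 2: positivity
  have h2 : ∀ Δ : Set (ℕ → 𝒳), MeasurableSet Δ → 0 ≤ Φ Δ := by
    intro Δ hm
    rw [ContinuousLinearMap.nonneg_iff_isPositive,
      ContinuousLinearMap.isPositive_iff_complex]
    intro x
    by_cases hx : x = 0
    · simp [hx]
    · have hd := diag Δ hm x hx
      have hx2 : @inner ℂ H _ ((Φ Δ) x) x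
          = ((‖x‖ ^ 2 * (μ (vecState x hx) Δ).toReal : ℝ) : ℂ) := by
        rw [← inner_conj_symm, hd, Complex.conj_ofReal]
      rw [hx2]
      constructor
      · norm_cast
      · have : RCLike.re ((((‖x‖ ^ 2 * (μ (vecState x hx) Δ).toReal : ℝ)) : ℂ))
            = (‖x‖ ^ 2 * (μ (vecState x hx) Δ).toReal : ℝ) := by norm_cast
        rw [this]
        positivity
  refine ⟨h1, h2, ?_⟩
  -- part 3: countable additivity in the weak operator topology
  intro Δ hm hd x y
  have hmU : MeasurableSet (⋃ n, Δ n) := MeasurableSet.iUnion hm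
  have key : ∀ z : H, HasSum (fun n => @inner ℂ H _ z (Φ (Δ n) z))
      (@inner ℂ H _ z (Φ (⋃ n, Δ n) z)) := by
    intro z
    by_cases hz : z = 0
    · simpa [hz] using hasSum_zero
    · have hmeas : μ (vecState z hz) (⋃ n, Δ n) = ∑' n, μ (vecState z hz) (Δ n) :=
        measure_iUnion hd hm
      have hlt : ∀ s : Set (ℕ → 𝒳), μ (vecState z hz) s ≠ ∞ := by
        intro s
        refine ne_of_lt (lt_of_le_of_lt (measure_mono (Set.subset_univ _)) ?_)
        rw [hμuniv]
        exact ENNReal.one_lt_top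
      have hfin : ∑' n, μ (vecState z hz) (Δ n) ≠ ∞ := by
        rw [← hmeas]; exact hlt _
      have hR := ENNReal.hasSum_toReal hfin
      have hts : ∑' n, (μ (vecState z hz) (Δ n)).toReal
          = (μ (vecState z hz) (⋃ n, Δ n)).toReal := by
        rw [hmeas, ENNReal.tsum_toReal_eq (fun n => hlt _)]
      rw [hts] at hR
      have hR2 := hR.mul_left (‖z‖ ^ 2)
      have hC := Complex.ofRealCLM.hasSum hR2
      have hfe : (fun n => ((Complex.ofRealCLM (‖z‖ ^ 2 * (μ (vecState z hz) (Δ n)).toReal)) : ℂ))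
          = fun n => @inner ℂ H _ z (Φ (Δ n) z) :=
        funext fun n => (diag (Δ n) (hm n) z hz).symm
      rw [hfe] at hC
      have hta : ((Complex.ofRealCLM (‖z‖ ^ 2 * (μ (vecState z hz) (⋃ n, Δ n)).toReal)) : ℂ)
          = @inner ℂ H _ z (Φ (⋃ n, Δ n) z) := (diag (⋃ n, Δ n) hmU z hz).symm
      rwa [hta] at hC
  -- reduce to the diagonal values by polarization
  have hSA : ∀ Δ' : Set (ℕ → 𝒳), MeasurableSet Δ' →
      LinearMap.IsSymmetric ((Φ Δ' : H →ₗ[ℂ] H)) := fun Δ' h' =>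
    (ContinuousLinearMap.isSelfAdjoint_iff_isSymmetric).mp
      (((ContinuousLinearMap.nonneg_iff_isPositive _).mp (h2 Δ' h')).isSelfAdjoint)
  have polar : ∀ Δ' : Set (ℕ → 𝒳), MeasurableSet Δ' →
      @inner ℂ H _ x (Φ Δ' y) =
      (@inner ℂ H _ (x + y) (Φ Δ' (x + y)) - @inner ℂ H _ (x - y) (Φ Δ' (x - y)) -
        Complex.I * @inner ℂ H _ (x + Complex.I • y) (Φ Δ' (x + Complex.I • y)) +
        Complex.I * @inner ℂ H _ (x - Complex.I • y) (Φ Δ' (x - Complex.I • y))) / 4 := by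
    intro Δ' h'
    have hs := hSA Δ' h'
    simp only [← ContinuousLinearMap.coe_coe (Φ Δ')]
    rw [← hs x y, inner_map_polarization', hs, hs, hs, hs]
  have H1 := key (x + y)
  have H2 := key (x - y)
  have H3 := key (x + Complex.I • y)
  have H4 := key (x - Complex.I • y)
  have HC := (((H1.sub H2).sub (H3.mul_left Complex.I)).add
    (H4.mul_left Complex.I)).div_const 4
  have hfe : (fun n => @inner ℂ H _ x (Φ (Δ n) y)) = fun n =>
      (@inner ℂ H _ (x + y) (Φ (Δ n) (x + y)) - @inner ℂ H _ (x - y) (Φ (Δ n) (x - y)) -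
        Complex.I * @inner ℂ H _ (x + Complex.I • y) (Φ (Δ n) (x + Complex.I • y)) +
        Complex.I * @inner ℂ H _ (x - Complex.I • y) (Φ (Δ n) (x - Complex.I • y))) / 4 :=
    funext fun n => polar (Δ n) (hm n)
  rw [hfe, polar (⋃ n, Δ n) hmU]
  exact HC
end
end

section
/- Let Δ ∈ Σ_∞ be a set in the tail σ-algebra of Ξ = 𝒳^ℕ and let (μ_m)_{m∈ℕ} be a sequence of finite measures on (Ξ, Σ). Then there exist strictly increasing sequences (i_n), (j_n) with i_n < j_n and sets Δ_n measurable with respect to the σ-algebra Σ_{i_n,j_n} generated by the coordinates ξ_{i_n},…,ξ_{j_n}, such that μ_m(Δ_n Δ Δ) < 1/n for all m ≤ n (symmetric difference). -/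
/-! Since `Δ` lies in `Σ_n` and `Σ_n` is generated by the increasing union of the block
σ-algebras `Σ_{n,j}`, `j ∈ ℕ`, which is an algebra of sets, `Δ` can be approximated by a
`Σ_{n,j}`-measurable set for the single finite measure `μ_0 + ⋯ + μ_n`, hence for each `μ_m`
with `m ≤ n`. Taking `i_n = n` and enlarging the `j_n` to a strictly increasing sequence gives the
claim. -/

open MeasureTheory Filter
open scoped ENNReal BigOperators symmDiff

noncomputable section

/-- `Σ_n`: the σ-algebra of events not depending on the first `n` coordinates,
realized as the pullback of the product σ-algebra under the shift by `n`. -/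
def shiftAlg (𝒳 : Type*) [MeasurableSpace 𝒳] (n : ℕ) : MeasurableSpace (ℕ → 𝒳) :=
  MeasurableSpace.comap (fun (x : ℕ → 𝒳) (i : ℕ) => x (i + n))
    (inferInstance : MeasurableSpace (ℕ → 𝒳))

/-- The tail σ-algebra `Σ_∞ = ⋂_n Σ_n`. -/
def tailAlg (𝒳 : Type*) [MeasurableSpace 𝒳] : MeasurableSpace (ℕ → 𝒳) :=
  ⨅ n : ℕ, shiftAlg 𝒳 n

/-- `Σ_{m,n}`: the σ-algebra of events depending only on the coordinates `m, …, n`. -/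
def blockAlg (𝒳 : Type*) [MeasurableSpace 𝒳] (m n : ℕ) : MeasurableSpace (ℕ → 𝒳) :=
  MeasurableSpace.comap (fun (x : ℕ → 𝒳) (i : Fin (n + 1 - m)) => x (m + (i : ℕ)))
    (inferInstance : MeasurableSpace (Fin (n + 1 - m) → 𝒳))

open Set

section DirectedSupremum

variable {α ι : Type*} {m : ι → MeasurableSpace α}

lemma isSetAlgebra_iUnion_measurableSet [Nonempty ι] (hm : Directed (· ≤ ·) m) :
    IsSetAlgebra (⋃ i, {s | MeasurableSet[m i] s}) where
  empty_mem := mem_iUnion.2 ⟨Classical.arbitrary ι, @MeasurableSet.empty _ (m _)⟩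
  compl_mem s hs := by
    obtain ⟨i, hi⟩ := mem_iUnion.1 hs
    exact mem_iUnion.2 ⟨i, MeasurableSet.compl hi⟩
  union_mem s t hs ht := by
    obtain ⟨i, hi⟩ := mem_iUnion.1 hs
    obtain ⟨j, hj⟩ := mem_iUnion.1 ht
    obtain ⟨k, hik, hjk⟩ := hm i j
    exact mem_iUnion.2 ⟨k, (hik _ hi).union (hjk _ hj)⟩

theorem exists_measurableSet_measure_symmDiff_lt_of_directed [Nonempty ι]
    {m0 : MeasurableSpace α} (μ : Measure α) [IsFiniteMeasure μ] (hm : Directed (· ≤ ·) m)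
    (hle : ∀ i, m i ≤ m0) {s : Set α} (hs : MeasurableSet[⨆ i, m i] s) {ε : ℝ≥0∞}
    (hε : 0 < ε) : ∃ i t, MeasurableSet[m i] t ∧ μ (t ∆ s) < ε := by
  have hsup : ⨆ i, m i ≤ m0 := iSup_le hle
  have h𝒜 := isSetAlgebra_iUnion_measurableSet hm
  have := isFiniteMeasure_trim (μ := μ) hsup
  obtain ⟨t, ht, hts⟩ := @exists_measure_symmDiff_lt_of_generateFrom_isSetRing α (⨆ i, m i)
    (μ.trim hsup) _ _ h𝒜.isSetRing ⟨{univ}, by simp, by simp [h𝒜.univ_mem], by simp⟩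
    (MeasurableSpace.generateFrom_iUnion_measurableSet m).symm _ hs _ hε
  obtain ⟨i, hi⟩ := mem_iUnion.1 ht
  refine ⟨i, t, hi, ?_⟩
  rwa [trim_measurableSet_eq hsup ((le_iSup m i _ hi).symmDiff hs)] at hts

theorem exists_measurableSet_forall_measure_symmDiff_lt_of_directed {κ : Type*} [Nonempty ι]
    {m0 : MeasurableSpace α} (μ : κ → Measure α) [∀ k, IsFiniteMeasure (μ k)] (S : Finset κ)
    (hm : Directed (· ≤ ·) m) (hle : ∀ i, m i ≤ m0) {s : Set α}
    (hs : MeasurableSet[⨆ i, m i] s) {ε : ℝ≥0∞} (hε : 0 < ε) :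
    ∃ i t, MeasurableSet[m i] t ∧ ∀ k ∈ S, μ k (t ∆ s) < ε := by
  obtain ⟨i, t, ht, hlt⟩ :=
    exists_measurableSet_measure_symmDiff_lt_of_directed (∑ k ∈ S, μ k) hm hle hs hε
  refine ⟨i, t, ht, fun k hk => lt_of_le_of_lt ?_ hlt⟩
  rw [Measure.finsetSum_apply]
  exact Finset.single_le_sum (f := fun k => μ k (t ∆ s)) (fun _ _ => zero_le) hk

end DirectedSupremum

section BlockAlg

variable (𝒳 : Type*) [MeasurableSpace 𝒳]

lemma measurable_apply_blockAlg {i j k : ℕ} (hik : i ≤ k) (hkj : k ≤ j) :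
    Measurable[blockAlg 𝒳 i j] fun x : ℕ → 𝒳 => x k := by
  have hcomp : (fun x : ℕ → 𝒳 => x k) =
      (fun y : Fin (j + 1 - i) → 𝒳 => y ⟨k - i, by omega⟩) ∘
        fun (x : ℕ → 𝒳) (l : Fin (j + 1 - i)) => x (i + (l : ℕ)) := by
    funext x
    simp only [Function.comp_apply]
    congr 1
    omega
  rw [hcomp]
  exact (measurable_pi_apply _).comp (comap_measurable _)

lemma blockAlg_mono (i : ℕ) : Monotone (blockAlg 𝒳 i) := fun j j' hjj' =>
  Measurable.comap_le <| @measurable_pi_lambda _ _ _ (blockAlg 𝒳 i j') _ _ fun l =>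
    measurable_apply_blockAlg 𝒳 (by omega) (by omega)

lemma blockAlg_le (i j : ℕ) : blockAlg 𝒳 i j ≤ (inferInstance : MeasurableSpace (ℕ → 𝒳)) :=
  Measurable.comap_le (measurable_pi_lambda _ fun _ => measurable_pi_apply _)

lemma shiftAlg_le_iSup_blockAlg (i : ℕ) : shiftAlg 𝒳 i ≤ ⨆ j, blockAlg 𝒳 i j :=
  Measurable.comap_le <| @measurable_pi_lambda _ _ _ (⨆ j, blockAlg 𝒳 i j) _ _ fun k =>
    (measurable_apply_blockAlg 𝒳 (j := k + i) (by omega) le_rfl).mono (le_iSup _ (k + i)) le_rfl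

lemma tailAlg_le_iSup_blockAlg (i : ℕ) : tailAlg 𝒳 ≤ ⨆ j, blockAlg 𝒳 i j :=
  (iInf_le _ i).trans (shiftAlg_le_iSup_blockAlg 𝒳 i)

end BlockAlg

lemma exists_strictMono_forall_lt_and_le (ℓ : ℕ → ℕ) :
    ∃ j : ℕ → ℕ, StrictMono j ∧ (∀ n, n < j n) ∧ ∀ n, ℓ n ≤ j n := by
  refine ⟨fun n => n + 1 + ∑ k ∈ Finset.range (n + 1), ℓ k,
    strictMono_nat_of_lt_succ fun n => ?_, fun n => by dsimp only; omega, fun n => ?_⟩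
  · simp only [Finset.sum_range_succ _ (n + 1)]
    omega
  · have := Finset.single_le_sum (fun k _ => Nat.zero_le (ℓ k)) (Finset.self_mem_range_succ n)
    dsimp only
    omega

theorem approx_tail_event_by_blocks_general
    {𝒳 : Type*} [MeasurableSpace 𝒳]
    (μ : ℕ → Measure (ℕ → 𝒳)) [∀ m, IsFiniteMeasure (μ m)]
    (Δ : Set (ℕ → 𝒳)) (hΔ : MeasurableSet[tailAlg 𝒳] Δ) :
    ∃ i j : ℕ → ℕ, StrictMono i ∧ StrictMono j ∧ (∀ n, i n < j n) ∧
      ∃ Δs : ℕ → Set (ℕ → 𝒳),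
        (∀ n, MeasurableSet[blockAlg 𝒳 (i n) (j n)] (Δs n)) ∧
        (∀ n : ℕ, ∀ m ≤ n, μ m (Δs n ∆ Δ) < 1 / (n : ℝ≥0∞)) := by
  choose ℓ Δs hΔs hμ using fun n =>
    exists_measurableSet_forall_measure_symmDiff_lt_of_directed μ (Finset.Iic n)
      (blockAlg_mono 𝒳 n).directed_le (blockAlg_le 𝒳 n) (tailAlg_le_iSup_blockAlg 𝒳 n Δ hΔ)
      (ε := 1 / (n : ℝ≥0∞)) (ENNReal.div_pos one_ne_zero (ENNReal.natCast_ne_top n))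
  obtain ⟨j, hj, hnj, hℓj⟩ := exists_strictMono_forall_lt_and_le ℓ
  exact ⟨id, j, strictMono_id, hj, hnj, Δs, fun n => blockAlg_mono 𝒳 n (hℓj n) _ (hΔs n),
    fun n m hm => hμ n m (Finset.mem_Iic.2 hm)⟩

/-- a tail event can be simultaneously approximated, for countably many
finite measures, by events depending on coordinates `i_n, …, j_n` only. -/
theorem approx_tail_event_by_blocks
    {𝒳 : Type*} [Fintype 𝒳] [Nonempty 𝒳] [MeasurableSpace 𝒳] [MeasurableSingletonClass 𝒳]
    (μ : ℕ → Measure (ℕ → 𝒳)) [∀ m, IsFiniteMeasure (μ m)]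
    (Δ : Set (ℕ → 𝒳)) (hΔ : MeasurableSet[tailAlg 𝒳] Δ) :
    ∃ i j : ℕ → ℕ, StrictMono i ∧ StrictMono j ∧ (∀ n, i n < j n) ∧
      ∃ Δs : ℕ → Set (ℕ → 𝒳),
        (∀ n, MeasurableSet[blockAlg 𝒳 (i n) (j n)] (Δs n)) ∧
        (∀ n : ℕ, ∀ m ≤ n, μ m (Δs n ∆ Δ) < 1 / (n : ℝ≥0∞)) :=
  approx_tail_event_by_blocks_general μ Δ hΔ
end
end

section
/- Assume the ideal decoherence condition: for all 1 ≤ m < n and m ≤ i ≤ n, ∑_{ξ_i ∈ 𝒳} Π_{ξ^{(m,n)}} (Π_{ξ^{(m,n)}})^* = Π_{ξ^{(m,i−1)}} Π_{ξ^{(i+1,n)}} (Π_{ξ^{(m,i−1)}} Π_{ξ^{(i+1,n)}})^*. Then for every bounded function f_n on Ξ measurable with respect to Σ_{i_n,j_n}, the operator Φ(f_n) equals ∑_{ξ^{(i_n,j_n)}} f_n(ξ^{(i_n,j_n)}) Π_{ξ^{(i_n,j_n)}} (Π_{ξ^{(i_n,j_n)}})^*, and in particular Φ(f_n) belongs to the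 algebra ℰ_{≥ t_{i_n}} generated by the projections at times ≥ t_{i_n}. -/
open MeasureTheory Filter
open scoped ENNReal NNReal BigOperators

noncomputable section

/-- Extension of a finite block of outcomes (coordinates `i ≤ k < j`) to a full history. -/
def extendBlock {𝒳 : Type*} [Inhabited 𝒳] (i j : ℕ) (v : Fin (j - i) → 𝒳) : ℕ → 𝒳 :=
  fun k => if h : i ≤ k ∧ k < j then v ⟨k - i, by omega⟩ else default

/-! Since `f` depends only on the outcomes before time `j`, its integral against the LSW
measure of a state `ω` is the finite sum `∑ᵤ f(u) μ_ω(cyl u) = ω(∑ᵤ f(u) Πᵤ Πᵤ^*)` over the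
histories `u` of length `j`, and normal states separate operators, so `Φ(f)` is that sum.
Ideal decoherence at the first time `m` of a block says that summing `Π Π^*` over the outcome
at `m` gives the effect of the block shortened by one step; summing out in this way the outcomes
before time `i`, on which `f` does not depend, leaves `∑ᵥ f(v) Πᵥ Πᵥ^*` over the outcomes `v`
at times `i, …, j - 1`. -/

local notation "⟪" x ", " y "⟫" => @inner ℂ _ _ x y

namespace DensityState

variable {H : Type*} [NormedAddCommGroup H] [InnerProductSpace ℂ H]

theorem summable_inner (ω : DensityState H) (A : H →L[ℂ] H) :
    Summable fun n => ⟪ω.ψ n, A (ω.ψ n)⟫ := by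
  refine .of_norm <| .of_nonneg_of_le (fun _ => norm_nonneg _) (fun n => ?_)
    (ω.summable'.mul_left ‖A‖)
  calc ‖⟪ω.ψ n, A (ω.ψ n)⟫‖ ≤ ‖ω.ψ n‖ * (‖A‖ * ‖ω.ψ n‖) :=
        (norm_inner_le_norm _ _).trans (by gcongr; exact A.le_opNorm _)
    _ = ‖A‖ * ‖ω.ψ n‖ ^ 2 := by ring

theorem val_sum {ι : Type*} (ω : DensityState H) (s : Finset ι) (A : ι → H →L[ℂ] H) :
    ω.val (∑ t ∈ s, A t) = ∑ t ∈ s, ω.val (A t) := by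
  simp only [val, _root_.sum_apply, inner_sum]
  exact Summable.tsum_finsetSum fun t _ => ω.summable_inner (A t)

theorem val_smul (ω : DensityState H) (c : ℂ) (A : H →L[ℂ] H) :
    ω.val (c • A) = c * ω.val A := by
  simp only [val, _root_.smul_apply, inner_smul_right, tsum_mul_left]

theorem val_mul_star [CompleteSpace H] (ω : DensityState H) (A : H →L[ℂ] H) :
    ω.val (A * star A) = ((∑' n, ‖star A (ω.ψ n)‖ ^ 2 : ℝ) : ℂ) := by
  rw [Complex.ofReal_tsum]
  refine tsum_congr fun n => ?_
  rw [mul_apply_eq_comp, ContinuousLinearMap.star_eq_adjoint,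
    ← ContinuousLinearMap.adjoint_inner_left, inner_self_eq_norm_sq_to_K]
  norm_cast

def ofUnit (ψ : H) (hψ : ‖ψ‖ = 1) : DensityState H where
  ψ n := if n = 0 then ψ else 0
  summable' := summable_of_ne_finset_zero (s := {0}) fun n hn => by simp_all
  norm_one := by rw [tsum_eq_single 0 fun n hn => by simp [hn]]; simp [hψ]

theorem val_ofUnit (ψ : H) (hψ : ‖ψ‖ = 1) (A : H →L[ℂ] H) :
    (ofUnit ψ hψ).val A = ⟪ψ, A ψ⟫ := by
  rw [val, tsum_eq_single 0 fun n hn => by simp [ofUnit, hn]]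
  simp [ofUnit]

theorem inner_map_self_eq_of_val_eq {A B : H →L[ℂ] H}
    (h : ∀ ω : DensityState H, ω.val A = ω.val B) (x : H) : ⟪x, A x⟫ = ⟪x, B x⟫ := by
  rcases eq_or_ne x 0 with rfl | hx
  · simp
  have hx' : (‖x‖ : ℂ) ≠ 0 := by exact_mod_cast norm_ne_zero_iff.mpr hx
  set u := (‖x‖ : ℂ)⁻¹ • x
  have hu : ‖u‖ = 1 := by simp [u, norm_smul, norm_ne_zero_iff.mpr hx]
  have hxu : x = (‖x‖ : ℂ) • u := by simp [u, smul_smul, hx']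
  have := (val_ofUnit u hu A).symm.trans ((h _).trans (val_ofUnit u hu B))
  rw [hxu]
  simp only [map_smul, inner_smul_left, inner_smul_right, this]

theorem ext_of_val_eq {A B : H →L[ℂ] H} (h : ∀ ω : DensityState H, ω.val A = ω.val B) :
    A = B := by
  refine ContinuousLinearMap.coe_injective ((ext_inner_map _ _).mp fun x => ?_)
  simpa only [ContinuousLinearMap.coe_coe, inner_conj_symm] using
    congrArg (starRingEnd ℂ) (inner_map_self_eq_of_val_eq h x)

end DensityState

section WriteBlock

variable {𝒳 : Type*}

def writeBlock (m : ℕ) {k : ℕ} (w : Fin k → 𝒳) (ξ : ℕ → 𝒳) : ℕ → 𝒳 :=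
  fun r => if h : m ≤ r ∧ r < m + k then w ⟨r - m, by omega⟩ else ξ r

theorem writeBlock_apply_of_not_mem {m k r : ℕ} (w : Fin k → 𝒳) (ξ : ℕ → 𝒳)
    (hr : r < m ∨ m + k ≤ r) : writeBlock m w ξ r = ξ r :=
  dif_neg (by omega)

theorem writeBlock_apply_add (m : ℕ) {k : ℕ} (w : Fin k → 𝒳) (ξ : ℕ → 𝒳) (t : Fin k) :
    writeBlock m w ξ (m + t) = w t := by
  rw [writeBlock, dif_pos (by omega)]
  congr 1
  ext
  simp

theorem writeBlock_zero_restrict {n r : ℕ} (ξ η : ℕ → 𝒳) (hr : r < n) :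
    writeBlock 0 (fun t : Fin n => ξ t) η r = ξ r := by
  simpa using writeBlock_apply_add 0 (fun t : Fin n => ξ t) η ⟨r, hr⟩

theorem writeBlock_fin_zero (m : ℕ) (w : Fin 0 → 𝒳) (ξ : ℕ → 𝒳) : writeBlock m w ξ = ξ :=
  funext fun _ => writeBlock_apply_of_not_mem w ξ (by omega)

theorem writeBlock_cons (m : ℕ) {k : ℕ} (x : 𝒳) (w : Fin k → 𝒳) (ξ : ℕ → 𝒳) :
    writeBlock m (Fin.cons x w) ξ = Function.update (writeBlock (m + 1) w ξ) m x := by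
  funext r
  rcases lt_trichotomy r m with hr | rfl | hr
  · rw [Function.update_of_ne hr.ne, writeBlock_apply_of_not_mem _ _ (.inl hr),
      writeBlock_apply_of_not_mem _ _ (.inl (by omega))]
  · simpa using writeBlock_apply_add r (Fin.cons x w : Fin (k + 1) → 𝒳) ξ 0
  · rw [Function.update_of_ne hr.ne']
    by_cases hrk : r < m + 1 + k
    · obtain ⟨t, rfl⟩ : ∃ t : Fin k, r = m + 1 + t := ⟨⟨r - (m + 1), by omega⟩, by simp; omega⟩
      rw [writeBlock_apply_add, show m + 1 + (t : ℕ) = m + (t.succ : ℕ) by simp; omega,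
        writeBlock_apply_add, Fin.cons_succ]
    · rw [writeBlock_apply_of_not_mem _ _ (.inr (by omega)),
        writeBlock_apply_of_not_mem _ _ (.inr (by omega))]

theorem writeBlock_append (m : ℕ) {a b : ℕ} (w : Fin a → 𝒳) (v : Fin b → 𝒳) (ξ : ℕ → 𝒳) :
    writeBlock m (Fin.append w v) ξ = writeBlock m w (writeBlock (m + a) v ξ) := by
  funext r
  by_cases hl : m ≤ r ∧ r < m + a
  · obtain ⟨t, rfl⟩ : ∃ t : Fin a, r = m + t := ⟨⟨r - m, by omega⟩, by simp; omega⟩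
    rw [writeBlock_apply_add]
    simpa using writeBlock_apply_add m (Fin.append w v) ξ (Fin.castAdd b t)
  by_cases hr : m + a ≤ r ∧ r < m + a + b
  · obtain ⟨t, rfl⟩ : ∃ t : Fin b, r = m + a + t := ⟨⟨r - (m + a), by omega⟩, by simp; omega⟩
    rw [writeBlock_apply_of_not_mem _ _ (.inr le_self_add), writeBlock_apply_add]
    simpa [add_assoc] using writeBlock_apply_add m (Fin.append w v) ξ (Fin.natAdd a t)
  · rw [writeBlock_apply_of_not_mem _ _ (by omega), writeBlock_apply_of_not_mem _ _ (by omega),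
      writeBlock_apply_of_not_mem _ _ (by omega)]

theorem sum_writeBlock_split {M : Type*} [AddCommMonoid M] [Fintype 𝒳]
    (F : (ℕ → 𝒳) → M) (m : ℕ) {a n : ℕ} (han : a ≤ n) (ξ : ℕ → 𝒳) :
    ∑ u : Fin n → 𝒳, F (writeBlock m u ξ)
      = ∑ w : Fin a → 𝒳, ∑ v : Fin (n - a) → 𝒳, F (writeBlock m w (writeBlock (m + a) v ξ)) := by
  obtain ⟨b, rfl⟩ := Nat.exists_eq_add_of_le han
  rw [Nat.add_sub_cancel_left, ← Fintype.sum_prod_type',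
    ← (Fin.appendEquiv a b).sum_comp]
  exact Fintype.sum_congr _ _ fun wv => congrArg F (writeBlock_append m wv.1 wv.2 ξ)

theorem extendBlock_eq_writeBlock [Inhabited 𝒳] (i j : ℕ) (v : Fin (j - i) → 𝒳) :
    extendBlock i j v = writeBlock i v default := by
  funext r
  simp only [extendBlock, writeBlock]
  by_cases h : i ≤ r ∧ r < j
  · rw [dif_pos h, dif_pos (by omega)]
  · rw [dif_neg h, dif_neg (by omega)]
    rfl

end WriteBlock

section BlockOp

variable {H 𝒳 : Type*} [NormedAddCommGroup H] [InnerProductSpace ℂ H]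
  (π : ℕ → 𝒳 → (H →L[ℂ] H))

theorem blockOp_self (m : ℕ) (ξ : ℕ → 𝒳) : blockOp π m m ξ = 1 := by
  simp [blockOp]

theorem histOp_eq_blockOp {n : ℕ} (v : Fin n → 𝒳) (ξ : ℕ → 𝒳)
    (h : ∀ t : Fin n, ξ t = v t) : histOp π v = blockOp π 0 n ξ := by
  rw [histOp, blockOp]
  congr 1
  refine List.ext_getElem (by simp) fun k hk _ => ?_
  simp [← h ⟨k, by simpa using hk⟩]

theorem histOp_eq_blockOp_writeBlock {n : ℕ} (u : Fin n → 𝒳) (ξ : ℕ → 𝒳) :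
    histOp π u = blockOp π 0 n (writeBlock 0 u ξ) :=
  histOp_eq_blockOp π u _ fun t => by simpa using writeBlock_apply_add 0 u ξ t

variable [CompleteSpace H]

def blockEffect (m n : ℕ) (ξ : ℕ → 𝒳) : H →L[ℂ] H :=
  blockOp π m n ξ * star (blockOp π m n ξ)

theorem sum_blockEffect_writeBlock [Fintype 𝒳]
    (htrace : ∀ (ξ : ℕ → 𝒳) (m n : ℕ), m < n →
      ∑ x : 𝒳, blockEffect π m n (Function.update ξ m x) = blockEffect π (m + 1) n ξ)
    {m n : ℕ} (k : ℕ) (hk : m + k ≤ n) (ξ : ℕ → 𝒳) :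
    ∑ w : Fin k → 𝒳, blockEffect π m n (writeBlock m w ξ) = blockEffect π (m + k) n ξ := by
  induction k generalizing m with
  | zero => simp [writeBlock_fin_zero]
  | succ k ih =>
    rw [← (Fin.consEquiv fun _ => 𝒳).sum_comp, Fintype.sum_prod_type, Finset.sum_comm]
    calc ∑ w : Fin k → 𝒳, ∑ x : 𝒳, blockEffect π m n (writeBlock m (Fin.cons x w) ξ)
        = ∑ w : Fin k → 𝒳, blockEffect π (m + 1) n (writeBlock (m + 1) w ξ) :=
          Fintype.sum_congr _ _ fun w => by
            simp only [writeBlock_cons, htrace _ m n (by omega)]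
      _ = blockEffect π (m + (k + 1)) n ξ := by
          rw [ih (by omega), Nat.add_right_comm, Nat.add_assoc]

theorem sum_smul_blockEffect_eq_of_dependsOn [Fintype 𝒳]
    (htrace : ∀ (ξ : ℕ → 𝒳) (m n : ℕ), m < n →
      ∑ x : 𝒳, blockEffect π m n (Function.update ξ m x) = blockEffect π (m + 1) n ξ)
    {i j : ℕ} (hij : i ≤ j) (g : (ℕ → 𝒳) → ℂ) (hg : DependsOn g (Set.Ico i j)) (ξ : ℕ → 𝒳) :
    ∑ u : Fin j → 𝒳, g (writeBlock 0 u ξ) • blockEffect π 0 j (writeBlock 0 u ξ)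
      = ∑ v : Fin (j - i) → 𝒳, g (writeBlock i v ξ) • blockEffect π i j (writeBlock i v ξ) := by
  rw [sum_writeBlock_split (fun η => g η • blockEffect π 0 j η) 0 hij, Finset.sum_comm]
  refine Fintype.sum_congr _ _ fun v => ?_
  have hgw : ∀ w : Fin i → 𝒳, g (writeBlock 0 w (writeBlock i v ξ)) = g (writeBlock i v ξ) :=
    fun w => hg fun r hr => writeBlock_apply_of_not_mem _ _ (.inr (by simpa using hr.1))
  simp only [Nat.zero_add, hgw, ← Finset.smul_sum]
  rw [sum_blockEffect_writeBlock π htrace i (by omega), Nat.zero_add]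

theorem blockEffect_mem_adjoin (hsa : ∀ k x, IsSelfAdjoint (π k x)) (m n : ℕ) (ξ : ℕ → 𝒳) :
    blockEffect π m n ξ ∈ Algebra.adjoin ℂ {A : H →L[ℂ] H | ∃ k, m ≤ k ∧ ∃ x : 𝒳, A = π k x} := by
  set S := {A : H →L[ℂ] H | ∃ k, m ≤ k ∧ ∃ x : 𝒳, A = π k x}
  have hop : blockOp π m n ξ ∈ Algebra.adjoin ℂ S := by
    refine Subalgebra.list_prod_mem _ fun A hA => Algebra.subset_adjoin ?_
    obtain ⟨k, hk, rfl⟩ := List.mem_map.mp hA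
    exact ⟨k, (List.mem_range'_1.mp hk).1, _, rfl⟩
  have hS : S ⊆ star S := fun A ⟨k, hk, x, hA⟩ =>
    ⟨k, hk, x, by rw [hA, (hsa k x).star_eq]⟩
  have hop_star : star (blockOp π m n ξ) ∈ Algebra.adjoin ℂ S := by
    rw [← Subalgebra.mem_star_iff, Subalgebra.star_adjoin_comm]
    exact Algebra.adjoin_mono hS hop
  exact mul_mem hop hop_star

end BlockOp

section LSW

theorem cyl_eq_preimage {𝒳 : Type*} {n : ℕ} (u : Fin n → 𝒳) :
    cyl u = (fun (ξ : ℕ → 𝒳) (t : Fin n) => ξ t) ⁻¹' {u} := by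
  ext ξ
  simp [cyl, funext_iff]

variable {𝒳 : Type*} [MeasurableSpace 𝒳]

theorem integral_comp_restrict [Fintype 𝒳] [MeasurableSingletonClass 𝒳]
    {E : Type*} [NormedAddCommGroup E] [NormedSpace ℝ E] [CompleteSpace E]
    (μ : Measure (ℕ → 𝒳)) [IsFiniteMeasure μ] {n : ℕ} (G : (Fin n → 𝒳) → E) :
    ∫ ξ, G (fun t => ξ t) ∂μ = ∑ u, μ.real (cyl u) • G u := by
  have hr : Measurable fun (ξ : ℕ → 𝒳) (t : Fin n) => ξ t :=
    measurable_pi_lambda _ fun t => measurable_pi_apply _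
  rw [← integral_map hr.aemeasurable AEStronglyMeasurable.of_discrete,
    integral_fintype .of_finite]
  simp [cyl_eq_preimage, map_measureReal_apply hr (measurableSet_singleton _)]

variable {H : Type*} [NormedAddCommGroup H] [InnerProductSpace ℂ H] [CompleteSpace H]
  {π : ℕ → 𝒳 → (H →L[ℂ] H)} {μ : Measure (ℕ → 𝒳)}

theorem IsLSW.isFiniteMeasure {φ : (H →L[ℂ] H) → ℂ} (h : IsLSW π φ μ) : IsFiniteMeasure μ := by
  have huniv : cyl (Fin.elim0 : Fin 0 → 𝒳) = Set.univ := by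
    ext ξ
    simp [cyl]
  exact ⟨by simpa [huniv] using (h 0 Fin.elim0).trans_lt ENNReal.ofReal_lt_top⟩

theorem IsLSW.measureReal_cyl {ω : DensityState H} (h : IsLSW π ω.val μ) {n : ℕ}
    (u : Fin n → 𝒳) : (μ.real (cyl u) : ℂ) = ω.val (histOp π u * star (histOp π u)) := by
  rw [measureReal_def, h, ω.val_mul_star, Complex.ofReal_re,
    ENNReal.toReal_ofReal (tsum_nonneg fun _ => sq_nonneg _)]

theorem eq_sum_smul_histOp_of_val_eq_integral [Fintype 𝒳] [MeasurableSingletonClass 𝒳]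
    {μ : DensityState H → Measure (ℕ → 𝒳)}
    (hμ : ∀ ω : DensityState H, IsLSW π ω.val (μ ω)) {n : ℕ} (G : (Fin n → 𝒳) → ℂ)
    {A : H →L[ℂ] H} (hA : ∀ ω : DensityState H, ω.val A = ∫ ξ, G (fun t => ξ t) ∂(μ ω)) :
    A = ∑ u, G u • (histOp π u * star (histOp π u)) := by
  refine DensityState.ext_of_val_eq fun ω => ?_
  have := (hμ ω).isFiniteMeasure
  rw [hA, integral_comp_restrict, DensityState.val_sum]
  refine Fintype.sum_congr _ _ fun u => ?_
  rw [DensityState.val_smul, ← (hμ ω).measureReal_cyl, Complex.real_smul, mul_comm]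

end LSW

theorem Phi_of_block_function_eq_sum_general
    {H 𝒳 : Type*} [NormedAddCommGroup H] [InnerProductSpace ℂ H] [CompleteSpace H]
    [Fintype 𝒳] [Inhabited 𝒳] [MeasurableSpace 𝒳] [MeasurableSingletonClass 𝒳]
    (π : ℕ → 𝒳 → (H →L[ℂ] H))
    (hsa : ∀ k x, IsSelfAdjoint (π k x))
    -- ideal decoherence, for the blocks `Π_{ξ^{(m,n)}}` (half-open convention):
    (hdec : ∀ (ξ : ℕ → 𝒳) (m n i : ℕ), m ≤ i → i < n →
      ∑ x : 𝒳,
        blockOp π m n (Function.update ξ i x) * star (blockOp π m n (Function.update ξ i x))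
        = (blockOp π m i ξ * blockOp π (i + 1) n ξ)
            * star (blockOp π m i ξ * blockOp π (i + 1) n ξ))
    (μ : DensityState H → Measure (ℕ → 𝒳))
    (hμ : ∀ ω : DensityState H, IsLSW π ω.val (μ ω))
    (i j : ℕ) (hij : i < j)
    (f : (ℕ → 𝒳) → ℂ)
    (hdep : ∀ ξ η : ℕ → 𝒳, (∀ k, i ≤ k → k < j → ξ k = η k) → f ξ = f η)
    (Φf : H →L[ℂ] H)
    (hΦf : ∀ ω : DensityState H, ω.val Φf = ∫ ξ, f ξ ∂(μ ω)) :
    Φf = ∑ v : Fin (j - i) → 𝒳,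
        f (extendBlock i j v) •
          (blockOp π i j (extendBlock i j v) * star (blockOp π i j (extendBlock i j v)))
    ∧ Φf ∈ Algebra.adjoin ℂ {A : H →L[ℂ] H | ∃ k, i ≤ k ∧ ∃ x : 𝒳, A = π k x} := by
  have htrace : ∀ (ξ : ℕ → 𝒳) (m n : ℕ), m < n →
      ∑ x : 𝒳, blockEffect π m n (Function.update ξ m x) = blockEffect π (m + 1) n ξ :=
    fun ξ m n hmn => by simpa [blockEffect, blockOp_self] using hdec ξ m n m le_rfl hmn
  have hf : DependsOn f (Set.Ico i j) := fun ξ η h => hdep ξ η fun k hi hj => h k ⟨hi, hj⟩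
  have hΦ_hist := eq_sum_smul_histOp_of_val_eq_integral hμ
    (fun u : Fin j → 𝒳 => f (writeBlock 0 u default)) fun ω => by
      rw [hΦf]
      exact integral_congr_ae <| .of_forall fun ξ =>
        hf fun k hk => (writeBlock_zero_restrict ξ default hk.2).symm
  have hΦ : Φf = ∑ v : Fin (j - i) → 𝒳,
      f (extendBlock i j v) • blockEffect π i j (extendBlock i j v) := by
    simp only [hΦ_hist, histOp_eq_blockOp_writeBlock π _ default, extendBlock_eq_writeBlock]
    exact sum_smul_blockEffect_eq_of_dependsOn π htrace hij.le f hf default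
  exact ⟨hΦ, hΦ ▸ Subalgebra.sum_mem _ fun v _ =>
    Subalgebra.smul_mem _ (blockEffect_mem_adjoin π hsa i j _) _⟩

/-- under ideal decoherence, for a bounded function `f` depending only on the
outcomes `i, …, j-1`, the operator `Φ(f)` equals
`∑_{ξ^{(i,j)}} f(ξ^{(i,j)}) Π_{ξ^{(i,j)}} (Π_{ξ^{(i,j)}})^*`; in particular it lies in the
algebra generated by the instrument projections at times `≥ i`. -/
theorem Phi_of_block_function_eq_sum
    {H 𝒳 : Type*} [NormedAddCommGroup H] [InnerProductSpace ℂ H] [CompleteSpace H]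
    [TopologicalSpace.SeparableSpace H]
    [Fintype 𝒳] [Inhabited 𝒳] [MeasurableSpace 𝒳] [MeasurableSingletonClass 𝒳]
    (π : ℕ → 𝒳 → (H →L[ℂ] H))
    (hsa : ∀ k x, IsSelfAdjoint (π k x)) (hid : ∀ k x, IsIdempotentElem (π k x))
    (hsum : ∀ k, ∑ x : 𝒳, π k x = 1)
    -- ideal decoherence, for the blocks `Π_{ξ^{(m,n)}}` (half-open convention):
    (hdec : ∀ (ξ : ℕ → 𝒳) (m n i : ℕ), m ≤ i → i < n →
      ∑ x : 𝒳,
        blockOp π m n (Function.update ξ i x) * star (blockOp π m n (Function.update ξ i x))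
        = (blockOp π m i ξ * blockOp π (i + 1) n ξ)
            * star (blockOp π m i ξ * blockOp π (i + 1) n ξ))
    (μ : DensityState H → Measure (ℕ → 𝒳))
    (hμ : ∀ ω : DensityState H, IsLSW π ω.val (μ ω))
    (i j : ℕ) (hij : i < j)
    (f : (ℕ → 𝒳) → ℂ) (hf : Measurable f) (C : ℝ) (hC : ∀ ξ, ‖f ξ‖ ≤ C)
    (hdep : ∀ ξ η : ℕ → 𝒳, (∀ k, i ≤ k → k < j → ξ k = η k) → f ξ = f η)
    (Φf : H →L[ℂ] H)
    (hΦf : ∀ ω : DensityState H, ω.val Φf = ∫ ξ, f ξ ∂(μ ω)) :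
    Φf = ∑ v : Fin (j - i) → 𝒳,
        f (extendBlock i j v) •
          (blockOp π i j (extendBlock i j v) * star (blockOp π i j (extendBlock i j v)))
    ∧ Φf ∈ Algebra.adjoin ℂ {A : H →L[ℂ] H | ∃ k, i ≤ k ∧ ∃ x : 𝒳, A = π k x} :=
  Phi_of_block_function_eq_sum_general π hsa hdec μ hμ i j hij f hdep Φf hΦf
end
end

section
/- Let (Ξ, Σ, μ) be a probability space, Σ_∞ ⊆ Σ a sub-σ-algebra, and suppose μ = ∫ μ(·|ν) dP(ν) is a decomposition of μ into probability measures μ(·|ν), ν in an index measure space (Ξ^∞, Σ^∞, P), such that the measures μ(·|ν) are mutually singular (they are supported on pairwise disjoint sets M_ν ∈ Σ_∞ with μ(M_ν|ν)=1) and each is Σ_∞-ergodic (μ(Λ|ν) ∈ {0,1} for Λ ∈ Σ_∞). Then each μ(·|ν) is an extreme point of the convex set 𝒦 of probability measures ρ on (Ξ,Σ) that are disintegrated by the family (μ(·|ν))_ν, i.e., satisfy ρ(Λ ∩ Δ) = ∫_Λ μ(Δ|ν̃(·)) dρ for all Δ ∈ Σ and Λ ∈ Σ_∞. -/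
open MeasureTheory Filter
open scoped ENNReal BigOperators

noncomputable section

/-- the ergodic, mutually singular components `μ(·|ν)` of a
`Σ_∞`-disintegration are extreme points of the convex set `𝒦` of probability measures
disintegrated by the family `(μ(·|ν))_ν`. -/
theorem ergodic_components_extremal
    {Ξ ΞI : Type*} (mTail : MeasurableSpace Ξ) [MeasurableSpace Ξ] [MeasurableSpace ΞI]
    (hle : mTail ≤ (inferInstance : MeasurableSpace Ξ))
    (μ : Measure Ξ) [IsProbabilityMeasure μ]
    (P : Measure ΞI) [IsProbabilityMeasure P]
    (κ : ΞI → Measure Ξ) (hκprob : ∀ ν, IsProbabilityMeasure (κ ν))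
    (molOf : Ξ → ΞI)
    -- the decomposition μ = ∫ κ ν dP(ν):
    (hdecomp : ∀ Δ : Set Ξ, MeasurableSet Δ → μ Δ = ∫⁻ ν, κ ν Δ ∂P)
    -- mutual singularity via pairwise disjoint tail-measurable supports M ν:
    (M : ΞI → Set Ξ) (hMmeas : ∀ ν, MeasurableSet[mTail] (M ν))
    (hMdisj : Pairwise (Function.onFun Disjoint M))
    (hMfull : ∀ ν, κ ν (M ν) = 1)
    (hmol : ∀ ν, ∀ ξ ∈ M ν, molOf ξ = ν)
    -- Σ_∞-ergodicity of each component: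
    (herg : ∀ ν, ∀ Λ : Set Ξ, MeasurableSet[mTail] Λ → κ ν Λ = 0 ∨ κ ν Λ = 1)
    -- the convex set 𝒦 of measures disintegrated by the family (κ ν):
    (K : Set (Measure Ξ))
    (hK : ∀ ρ : Measure Ξ, ρ ∈ K ↔ (IsProbabilityMeasure ρ ∧
      ∀ Δ : Set Ξ, MeasurableSet Δ → ∀ Λ : Set Ξ, MeasurableSet[mTail] Λ →
        ρ (Λ ∩ Δ) = ∫⁻ ξ in Λ, κ (molOf ξ) Δ ∂ρ))
    -- each component is itself a member of 𝒦:
    (hκK : ∀ ν, κ ν ∈ K) :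
    -- extremality: no component is a nontrivial convex combination of elements of 𝒦
    ∀ ν, ∀ ρ₁ ∈ K, ∀ ρ₂ ∈ K, ∀ t : ℝ, 0 < t → t < 1 →
      κ ν = ENNReal.ofReal t • ρ₁ + ENNReal.ofReal (1 - t) • ρ₂ → ρ₁ = ρ₂ := by

  intro ν ρ₁ hρ₁ ρ₂ hρ₂ t ht0 ht1 heq
  obtain ⟨hρ₁p, hρ₁d⟩ := (hK ρ₁).mp hρ₁
  obtain ⟨hρ₂p, hρ₂d⟩ := (hK ρ₂).mp hρ₂
  have hMm : MeasurableSet (M ν) := hle _ (hMmeas ν)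
  -- both ρ₁ and ρ₂ give full mass to M ν
  have hcomb : ENNReal.ofReal t * ρ₁ (M ν) + ENNReal.ofReal (1 - t) * ρ₂ (M ν) = 1 := by
    have := hMfull ν
    rw [heq] at this
    simpa [Measure.add_apply, Measure.smul_apply, smul_eq_mul] using this
  have hsum : ENNReal.ofReal t + ENNReal.ofReal (1 - t) = 1 := by
    rw [← ENNReal.ofReal_add ht0.le (by linarith)]
    norm_num
  have hfull : ∀ (ρ : Measure Ξ), IsProbabilityMeasure ρ → ∀ s : ℝ, 0 < s → s < 1 →
      1 ≤ ENNReal.ofReal s * ρ (M ν) + (1 - ENNReal.ofReal s) → ρ (M ν) = 1 := by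
    intro ρ hp s hs0 hs1 hle'
    by_contra hne
    have hlt : ρ (M ν) < 1 := lt_of_le_of_ne prob_le_one hne
    have h1 : ENNReal.ofReal s * ρ (M ν) < ENNReal.ofReal s * 1 :=
      ENNReal.mul_lt_mul_right (by simpa using hs0) ENNReal.ofReal_ne_top hlt
    have h2 : ENNReal.ofReal s * ρ (M ν) + (1 - ENNReal.ofReal s)
        < ENNReal.ofReal s * 1 + (1 - ENNReal.ofReal s) :=
      ENNReal.add_lt_add_right (by simp [ENNReal.sub_ne_top]) h1
    have h3 : ENNReal.ofReal s * 1 + (1 - ENNReal.ofReal s) = 1 := by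
      rw [mul_one]
      exact add_tsub_cancel_of_le (by simpa using ENNReal.ofReal_le_one.mpr hs1.le)
    exact absurd hle' (not_le.mpr (h2.trans_eq h3))
  have hone : (1 : ℝ≥0∞) - ENNReal.ofReal t = ENNReal.ofReal (1 - t) := by
    rw [← hsum, ENNReal.add_sub_cancel_left ENNReal.ofReal_ne_top]
  have honet : (1 : ℝ≥0∞) - ENNReal.ofReal (1 - t) = ENNReal.ofReal t := by
    rw [← hsum, ENNReal.add_sub_cancel_right ENNReal.ofReal_ne_top]
  have hρ₁full : ρ₁ (M ν) = 1 := by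
    apply hfull ρ₁ hρ₁p t ht0 ht1
    rw [hone]
    calc (1 : ℝ≥0∞) = ENNReal.ofReal t * ρ₁ (M ν) + ENNReal.ofReal (1 - t) * ρ₂ (M ν) :=
          hcomb.symm
      _ ≤ ENNReal.ofReal t * ρ₁ (M ν) + ENNReal.ofReal (1 - t) * 1 := by
          gcongr
          exact prob_le_one
      _ = ENNReal.ofReal t * ρ₁ (M ν) + ENNReal.ofReal (1 - t) := by rw [mul_one]
  have hρ₂full : ρ₂ (M ν) = 1 := by
    apply hfull ρ₂ hρ₂p (1 - t) (by linarith) (by linarith)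
    rw [honet]
    rw [hρ₁full, mul_one] at hcomb
    rw [add_comm] at hcomb
    exact hcomb.ge
  -- any element of K with full mass on M ν equals κ ν
  have key : ∀ (ρ : Measure Ξ), IsProbabilityMeasure ρ → ρ (M ν) = 1 →
      (∀ Δ : Set Ξ, MeasurableSet Δ → ∀ Λ : Set Ξ, MeasurableSet[mTail] Λ →
        ρ (Λ ∩ Δ) = ∫⁻ ξ in Λ, κ (molOf ξ) Δ ∂ρ) → ρ = κ ν := by
    intro ρ hp hf hd
    ext Δ hΔ
    have h0 : ρ (M ν)ᶜ = 0 := by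
      rw [measure_compl hMm (measure_ne_top _ _), hf, measure_univ, tsub_self]
    have hdiff : ρ (Δ \ M ν) = 0 :=
      measure_mono_null (Set.diff_subset_iff.mpr (by simp [Set.union_comm, Set.compl_union_self]
        )) h0
    have hsplit : ρ Δ = ρ (M ν ∩ Δ) := by
      rw [Set.inter_comm]
      have := measure_inter_add_diff Δ hMm (μ := ρ)
      rw [hdiff, add_zero] at this
      exact this.symm
    rw [hsplit, hd Δ hΔ (M ν) (hMmeas ν)]
    have : ∫⁻ ξ in M ν, κ (molOf ξ) Δ ∂ρ = ∫⁻ _ξ in M ν, κ ν Δ ∂ρ := by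
      apply setLIntegral_congr_fun hMm
      exact fun ξ hξ => by rw [hmol ν ξ hξ]
    rw [this, setLIntegral_const, hf, mul_one]
  rw [key ρ₁ hρ₁p hρ₁full hρ₁d, key ρ₂ hρ₂p hρ₂full hρ₂d]
end
end
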